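/- Let 0 < q ≤ p ≤ ∞. Then for all positive integers k and n, e_k(id : ℓ_p^n(ℝ) → ℓ_q^n(ℝ)) ≤ 4^{1/p̄} · 2^{-(k-1)/n} · n^{1/q - 1/p}, where p̄ = min(1,p). -/

import Mathlib

open scoped ENNReal

/-- The `ℓ_p` (quasi-)norm on `ℝ^n`, `0 < p ≤ ∞`. -/
noncomputable def lpnorm (p : ℝ≥0∞) {n : ℕ} (x : Fin n → ℝ) : ℝ :=
  if p = ∞ then ⨆ i, |x i| else (∑ i, |x i| ^ p.toReal) ^ (1 / p.toReal)

/-- The `k`-th dyadic entropy number of the identity `id : ℓ_p^n(ℝ) → ℓ_q^n(ℝ)`: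
the infimum of `r > 0` such that the unit ball of `ℓ_p^n` can be covered by `2^(k-1)`
balls of radius `r` in `ℓ_q^n`. -/
noncomputable def entropyLp (p q : ℝ≥0∞) (n k : ℕ) : ℝ :=
  sInf {r : ℝ | 0 < r ∧ ∃ S : Finset (Fin n → ℝ), S.card ≤ 2 ^ (k - 1) ∧
    ∀ x : Fin n → ℝ, lpnorm p x ≤ 1 → ∃ y ∈ S, lpnorm q (x - y) ≤ r}

/-!
For `0 < p` the quasi-norm `‖·‖_p` is an `s`-norm with `s = min 1 p`: it is positively
homogeneous and `‖x + y‖_p ^ s ≤ ‖x‖_p ^ s + ‖y‖_p ^ s`. A maximal `ρ`-separated subset of the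
unit ball `B` is a `ρ`-net of `B`. The balls of radius `r = (ρ ^ s / 2) ^ (1 / s)` around its
points are disjoint and lie in `R • B`, `R = (1 + ρ ^ s / 2) ^ (1 / s)`, so comparing volumes the
net has at most `(R / r) ^ n ≤ (4 ^ (1 / s) / ρ) ^ n` points once `ρ ^ s ≤ 2`. For
`ρ = 4 ^ (1 / s) * 2 ^ (-(k - 1) / n)` this is `2 ^ (k - 1)`, and the net is transported to `ℓ_q`
by `‖z‖_q ≤ n ^ (1 / q - 1 / p) * ‖z‖_p`.
-/

open Finset MeasureTheory Module
open scoped Pointwise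

structure IsSNorm {E : Type*} [AddCommGroup E] [Module ℝ E] (s : ℝ) (ν : E → ℝ) : Prop where
  nonneg : ∀ x, 0 ≤ ν x
  neg : ∀ x, ν (-x) = ν x
  smul : ∀ {t : ℝ}, 0 ≤ t → ∀ x, ν (t • x) = t * ν x
  rpow_add_le : ∀ x y, ν (x + y) ^ s ≤ ν x ^ s + ν y ^ s

lemma Finset.exists_cover_of_pairwise_card_le {α : Type*} {B : Set α} {far : α → α → Prop}
    (hsymm : ∀ x y, far x y → far y x) (hirrefl : ∀ x, ¬ far x x) {N : ℕ}
    (hcard : ∀ T : Finset α, ↑T ⊆ B → (T : Set α).Pairwise far → T.card ≤ N) :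
    ∃ S : Finset α, S.card ≤ N ∧ ∀ x ∈ B, ∃ y ∈ S, ¬ far x y := by
  classical
  let P : ℕ → Prop := fun m => ∃ T : Finset α, ↑T ⊆ B ∧ (T : Set α).Pairwise far ∧ T.card = m
  obtain ⟨S, hSB, hSfar, hScard⟩ : P (Nat.findGreatest P N) :=
    Nat.findGreatest_spec (Nat.zero_le N) ⟨∅, by simp, by simp, rfl⟩
  refine ⟨S, hScard ▸ Nat.findGreatest_le N, fun x hx => ?_⟩
  by_contra! hxfar
  have hxS : x ∉ S := fun h => hirrefl x (hxfar x h)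
  have hinsert : P (S.card + 1) := by
    refine ⟨insert x S, ?_, ?_, card_insert_of_notMem hxS⟩
    · simpa [Set.insert_subset_iff] using ⟨hx, hSB⟩
    · rw [coe_insert, Set.pairwise_insert]
      exact ⟨hSfar, fun y hy _ => ⟨hxfar y hy, hsymm _ _ (hxfar y hy)⟩⟩
  obtain ⟨T, hTB, hTfar, hTcard⟩ := hinsert
  exact Nat.findGreatest_is_greatest (P := P) (by omega) (hTcard ▸ hcard T hTB hTfar)
    ⟨T, hTB, hTfar, hTcard⟩

namespace IsSNorm

variable {E : Type*} {s : ℝ} {ν : E → ℝ}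

section AddCommGroup

variable [AddCommGroup E] [Module ℝ E]

lemma map_zero (hν : IsSNorm s ν) : ν 0 = 0 := by
  simpa using hν.smul le_rfl (0 : E)

lemma rpow_sub_le (hν : IsSNorm s ν) (x y z : E) :
    ν (x - z) ^ s ≤ ν (x - y) ^ s + ν (y - z) ^ s := by
  simpa using hν.rpow_add_le (x - y) (y - z)

lemma sublevel_eq_smul (hν : IsSNorm s ν) {t : ℝ} (ht : 0 < t) :
    {x | ν x ≤ t} = t • {x | ν x ≤ 1} := by
  ext x
  rw [Set.mem_smul_set_iff_inv_smul_mem₀ ht.ne', Set.mem_ofPred_eq, Set.mem_ofPred_eq,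
    hν.smul (inv_nonneg.2 ht.le), inv_mul_eq_div, div_le_one ht]

end AddCommGroup

variable [NormedAddCommGroup E] [NormedSpace ℝ E] [MeasurableSpace E]

lemma addHaar_unitBall_pos (hν : IsSNorm s ν) (hcont : Continuous ν) (μ : Measure E)
    [μ.IsAddHaarMeasure] : 0 < μ {x | ν x ≤ 1} :=
  (IsOpen.measure_pos μ (isOpen_lt hcont continuous_const) ⟨0, by simp [hν.map_zero]⟩).trans_le
    (measure_mono fun x (hx : ν x < 1) => hx.le)

variable [FiniteDimensional ℝ E] [BorelSpace E]

lemma addHaar_sublevel (hν : IsSNorm s ν) (μ : Measure E) [μ.IsAddHaarMeasure] {t : ℝ}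
    (ht : 0 < t) :
    μ {x | ν x ≤ t} = ENNReal.ofReal (t ^ finrank ℝ E) * μ {x | ν x ≤ 1} := by
  rw [hν.sublevel_eq_smul ht, Measure.addHaar_smul, abs_of_nonneg (by positivity)]

lemma card_mul_pow_le_of_pairwiseDisjoint (hν : IsSNorm s ν) (hcont : Continuous ν)
    (hbdd : Bornology.IsBounded {x | ν x ≤ 1}) {r R : ℝ} (hr : 0 < r) (hR : 0 < R)
    {T : Finset E} (hdisj : (T : Set E).PairwiseDisjoint fun y => {z | ν (z - y) ≤ r})
    (hsub : ∀ y ∈ T, ∀ z, ν (z - y) ≤ r → ν z ≤ R) :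
    (T.card : ℝ) * r ^ finrank ℝ E ≤ R ^ finrank ℝ E := by
  let μ : Measure E := Measure.addHaar
  have htranslate : ∀ y, {z | ν (z - y) ≤ r} = (· + -y) ⁻¹' {x | ν x ≤ r} := fun y => by
    simp [sub_eq_add_neg]
  have hvol : (T.card : ℝ≥0∞) * μ {x | ν x ≤ r} ≤ μ {x | ν x ≤ R} :=
    calc (T.card : ℝ≥0∞) * μ {x | ν x ≤ r} = ∑ y ∈ T, μ {z | ν (z - y) ≤ r} := by
          simp only [htranslate, measure_preimage_add_right, sum_const, nsmul_eq_mul]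
      _ = μ (⋃ y ∈ T, {z | ν (z - y) ≤ r}) := by
          refine (measure_biUnion_finset hdisj fun y _ => ?_).symm
          rw [htranslate]
          exact (isClosed_le hcont continuous_const).measurableSet.preimage
            (measurable_add_const _)
      _ ≤ μ {x | ν x ≤ R} := measure_mono <| Set.iUnion₂_subset hsub
  rw [hν.addHaar_sublevel μ hr, hν.addHaar_sublevel μ hR, ← mul_assoc,
    ENNReal.mul_le_mul_iff_left (hν.addHaar_unitBall_pos hcont μ).ne' hbdd.measure_lt_top.ne,
    ← ENNReal.ofReal_natCast, ← ENNReal.ofReal_mul (by positivity)] at hvol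
  exact (ENNReal.ofReal_le_ofReal_iff (by positivity)).1 hvol

lemma card_le_of_pairwise_lt (hν : IsSNorm s ν) (hs : 0 < s) (hcont : Continuous ν)
    (hbdd : Bornology.IsBounded {x | ν x ≤ 1}) {ρ : ℝ} (hρ : 0 < ρ) {T : Finset E}
    (hTB : ∀ y ∈ T, ν y ≤ 1) (hT : (T : Set E).Pairwise fun a b => ρ < ν (a - b)) :
    (T.card : ℝ) ≤ ((1 + 2 / ρ ^ s) ^ s⁻¹) ^ finrank ℝ E := by
  set r := (ρ ^ s / 2) ^ s⁻¹
  set R := (1 + ρ ^ s / 2) ^ s⁻¹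
  have hρs : 0 < ρ ^ s := Real.rpow_pos_of_pos hρ s
  have hr : 0 < r := by positivity
  have hR : 0 < R := by positivity
  have hle_r : ∀ x, ν x ≤ r ↔ ν x ^ s ≤ ρ ^ s / 2 := fun x => by
    rw [← Real.rpow_le_rpow_iff (hν.nonneg x) hr.le hs, Real.rpow_inv_rpow (by positivity) hs.ne']
  have hdisj : (T : Set E).PairwiseDisjoint fun y => {z | ν (z - y) ≤ r} := by
    intro a ha b hb hab
    refine Set.disjoint_left.2 fun z (hza : ν (z - a) ≤ r) (hzb : ν (z - b) ≤ r) => ?_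
    have hlt := Real.rpow_lt_rpow hρ.le (hT ha hb hab) hs
    have := hν.rpow_sub_le a z b
    rw [← neg_sub z a, hν.neg] at this
    linarith [(hle_r _).1 hza, (hle_r _).1 hzb]
  have hsub : ∀ y ∈ T, ∀ z, ν (z - y) ≤ r → ν z ≤ R := by
    intro y hy z hz
    have hy1 := Real.rpow_le_one (hν.nonneg y) (hTB y hy) hs.le
    have := hν.rpow_sub_le z y 0
    rw [sub_zero, sub_zero] at this
    rw [← Real.rpow_le_rpow_iff (hν.nonneg z) hR.le hs, Real.rpow_inv_rpow (by positivity) hs.ne']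
    linarith [(hle_r _).1 hz]
  calc (T.card : ℝ) ≤ (R / r) ^ finrank ℝ E := by
        rw [div_pow, le_div_iff₀ (by positivity)]
        exact hν.card_mul_pow_le_of_pairwiseDisjoint hcont hbdd hr hR hdisj hsub
    _ = ((1 + 2 / ρ ^ s) ^ s⁻¹) ^ finrank ℝ E := by
        rw [← Real.div_rpow (by positivity) (by positivity)]
        congr 2
        field_simp
        ring

lemma exists_cover (hν : IsSNorm s ν) (hs : 0 < s) (hcont : Continuous ν)
    (hbdd : Bornology.IsBounded {x | ν x ≤ 1}) {ρ : ℝ} (hρ : 0 < ρ) {N : ℕ}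
    (hN : ((1 + 2 / ρ ^ s) ^ s⁻¹) ^ finrank ℝ E ≤ N) :
    ∃ S : Finset E, S.card ≤ N ∧ ∀ x, ν x ≤ 1 → ∃ y ∈ S, ν (x - y) ≤ ρ := by
  obtain ⟨S, hSN, hS⟩ := Finset.exists_cover_of_pairwise_card_le (B := {x | ν x ≤ 1})
    (far := fun a b => ρ < ν (a - b)) (fun a b h => by rwa [← neg_sub, hν.neg])
    (fun x => by simp [hν.map_zero, hρ.le]) fun T hTB hT => by
      exact_mod_cast (hν.card_le_of_pairwise_lt hs hcont hbdd hρ (fun y hy => hTB hy) hT).trans hN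
  exact ⟨S, hSN, fun x hx => by simpa using hS x hx⟩

end IsSNorm

section lpnorm

variable {n : ℕ} {p q : ℝ≥0∞}

lemma lpnorm_nonneg (p : ℝ≥0∞) (x : Fin n → ℝ) : 0 ≤ lpnorm p x := by
  unfold lpnorm
  split
  · exact Real.iSup_nonneg fun i => abs_nonneg _
  · positivity

lemma lpnorm_of_ne_top (hp : p ≠ ∞) (x : Fin n → ℝ) :
    lpnorm p x = (∑ i, |x i| ^ p.toReal) ^ p.toReal⁻¹ := by
  rw [lpnorm, if_neg hp, one_div]

lemma lpnorm_top (x : Fin n → ℝ) : lpnorm ∞ x = ‖x‖ := by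
  rw [lpnorm, if_pos rfl]
  rcases isEmpty_or_nonempty (Fin n) with h | h
  · simp [Subsingleton.elim x 0]
  · refine le_antisymm (ciSup_le fun i => ?_) ?_
    · exact norm_le_pi_norm x i
    · exact (pi_norm_le_iff_of_nonneg (Real.iSup_nonneg fun i => abs_nonneg _)).2 fun i =>
        le_ciSup (f := fun j => |x j|) (Set.finite_range _).bddAbove i

lemma lpnorm_rpow_toReal (hp0 : p ≠ 0) (hp : p ≠ ∞) (x : Fin n → ℝ) :
    lpnorm p x ^ p.toReal = ∑ i, |x i| ^ p.toReal := by
  rw [lpnorm_of_ne_top hp, Real.rpow_inv_rpow (by positivity) (ENNReal.toReal_pos hp0 hp).ne']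

lemma abs_le_lpnorm (hp0 : p ≠ 0) (x : Fin n → ℝ) (i : Fin n) : |x i| ≤ lpnorm p x := by
  by_cases hp : p = ∞
  · subst hp
    rw [lpnorm_top, ← Real.norm_eq_abs]
    exact norm_le_pi_norm x i
  · rw [← Real.rpow_le_rpow_iff (abs_nonneg _) (lpnorm_nonneg _ _) (ENNReal.toReal_pos hp0 hp),
      lpnorm_rpow_toReal hp0 hp]
    exact single_le_sum (f := fun j => |x j| ^ p.toReal) (fun j _ => by positivity) (mem_univ i)

lemma norm_le_lpnorm (hp0 : p ≠ 0) (x : Fin n → ℝ) : ‖x‖ ≤ lpnorm p x :=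
  (pi_norm_le_iff_of_nonneg (lpnorm_nonneg p x)).2 (abs_le_lpnorm hp0 x)

lemma isBounded_setOf_lpnorm_le (hp0 : p ≠ 0) (r : ℝ) :
    Bornology.IsBounded {x : Fin n → ℝ | lpnorm p x ≤ r} :=
  isBounded_iff_forall_norm_le.2 ⟨r, fun x hx => (norm_le_lpnorm hp0 x).trans hx⟩

lemma continuous_lpnorm (p : ℝ≥0∞) : Continuous (lpnorm p : (Fin n → ℝ) → ℝ) := by
  by_cases hp : p = ∞
  · subst hp
    rw [show lpnorm ∞ = fun x : Fin n → ℝ => ‖x‖ from funext lpnorm_top]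
    exact continuous_norm
  · rw [show lpnorm p = fun x : Fin n → ℝ => _ from funext (lpnorm_of_ne_top hp)]
    exact (continuous_finsetSum _ fun i _ => (continuous_apply i).abs.rpow_const
      fun _ => Or.inr ENNReal.toReal_nonneg).rpow_const
      fun _ => Or.inr (inv_nonneg.2 ENNReal.toReal_nonneg)

lemma lpnorm_neg (p : ℝ≥0∞) (x : Fin n → ℝ) : lpnorm p (-x) = lpnorm p x := by
  simp [lpnorm]

lemma lpnorm_smul (hp0 : p ≠ 0) {t : ℝ} (ht : 0 ≤ t) (x : Fin n → ℝ) :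
    lpnorm p (t • x) = t * lpnorm p x := by
  by_cases hp : p = ∞
  · subst hp
    rw [lpnorm_top, lpnorm_top, norm_smul, Real.norm_of_nonneg ht]
  · have hc := ENNReal.toReal_pos hp0 hp
    have hterm : ∀ i, |(t • x) i| ^ p.toReal = t ^ p.toReal * |x i| ^ p.toReal := fun i => by
      rw [Pi.smul_apply, smul_eq_mul, abs_mul, abs_of_nonneg ht, Real.mul_rpow ht (abs_nonneg _)]
    rw [lpnorm_of_ne_top hp, lpnorm_of_ne_top hp, funext hterm, ← mul_sum,
      Real.mul_rpow (by positivity) (by positivity), Real.rpow_rpow_inv ht hc.ne']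

lemma lpnorm_add_le (hp : 1 ≤ p) (x y : Fin n → ℝ) :
    lpnorm p (x + y) ≤ lpnorm p x + lpnorm p y := by
  by_cases hpt : p = ∞
  · subst hpt
    simpa only [lpnorm_top] using norm_add_le x y
  · simp only [lpnorm_of_ne_top hpt, ← one_div]
    exact Real.Lp_add_le univ x y (by simpa using ENNReal.toReal_mono hpt hp)

lemma lpnorm_add_rpow_le (hp0 : p ≠ 0) (hp : p ≤ 1) (x y : Fin n → ℝ) :
    lpnorm p (x + y) ^ p.toReal ≤ lpnorm p x ^ p.toReal + lpnorm p y ^ p.toReal := by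
  have hpt : p ≠ ∞ := ne_top_of_le_ne_top ENNReal.one_ne_top hp
  have hc1 : p.toReal ≤ 1 := by simpa using ENNReal.toReal_mono ENNReal.one_ne_top hp
  simp only [lpnorm_rpow_toReal hp0 hpt, ← sum_add_distrib]
  refine sum_le_sum fun i _ => ?_
  calc |(x + y) i| ^ p.toReal ≤ (|x i| + |y i|) ^ p.toReal := by
        gcongr
        exact abs_add_le (x i) (y i)
    _ ≤ |x i| ^ p.toReal + |y i| ^ p.toReal :=
        Real.rpow_add_le_add_rpow (abs_nonneg _) (abs_nonneg _) ENNReal.toReal_nonneg hc1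

lemma isSNorm_lpnorm (hp : 0 < p) : IsSNorm (min 1 p).toReal (lpnorm p : (Fin n → ℝ) → ℝ) where
  nonneg := lpnorm_nonneg p
  neg := lpnorm_neg p
  smul := lpnorm_smul hp.ne'
  rpow_add_le x y := by
    rcases le_total 1 p with h | h
    · simpa [min_eq_left h] using lpnorm_add_le h x y
    · simpa [min_eq_right h] using lpnorm_add_rpow_le hp.ne' h x y

lemma lpnorm_le_mul_norm (hq0 : q ≠ 0) (hq : q ≠ ∞) (z : Fin n → ℝ) :
    lpnorm q z ≤ (n : ℝ) ^ q.toReal⁻¹ * ‖z‖ := by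
  have hsum : ∑ i, |z i| ^ q.toReal ≤ n * ‖z‖ ^ q.toReal :=
    calc ∑ i, |z i| ^ q.toReal ≤ ∑ _i : Fin n, ‖z‖ ^ q.toReal := sum_le_sum fun i _ =>
          Real.rpow_le_rpow (abs_nonneg (z i)) (norm_le_pi_norm z i) ENNReal.toReal_nonneg
      _ = n * ‖z‖ ^ q.toReal := by simp
  calc lpnorm q z ≤ (n * ‖z‖ ^ q.toReal) ^ q.toReal⁻¹ := by
        rw [lpnorm_of_ne_top hq]
        gcongr
    _ = (n : ℝ) ^ q.toReal⁻¹ * ‖z‖ := by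
        rw [Real.mul_rpow (by positivity) (by positivity),
          Real.rpow_rpow_inv (norm_nonneg z) (ENNReal.toReal_pos hq0 hq).ne']

lemma lpnorm_le_mul_lpnorm_of_ne_top (hq : 0 < q) (hqp : q ≤ p) (hp : p ≠ ∞) (z : Fin n → ℝ) :
    lpnorm q z ≤ (n : ℝ) ^ (q.toReal⁻¹ - p.toReal⁻¹) * lpnorm p z := by
  have hq' := ENNReal.toReal_pos hq.ne' (ne_top_of_le_ne_top hp hqp)
  have hp' := ENNReal.toReal_pos (hq.trans_le hqp).ne' hp
  set t := p.toReal / q.toReal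
  have ht : 1 ≤ t := (one_le_div hq').2 (ENNReal.toReal_mono hp hqp)
  have hpow : ∀ i, (|z i| ^ q.toReal) ^ t = |z i| ^ p.toReal := fun i => by
    rw [← Real.rpow_mul (abs_nonneg _), mul_div_cancel₀ _ hq'.ne']
  have hsum := Real.rpow_sum_le_const_mul_sum_rpow_of_nonneg univ ht
    (f := fun i => |z i| ^ q.toReal) fun i _ => by positivity
  simp only [hpow, card_univ, Fintype.card_fin] at hsum
  calc lpnorm q z = ((∑ i, |z i| ^ q.toReal) ^ t) ^ p.toReal⁻¹ := by
        rw [lpnorm_of_ne_top (ne_top_of_le_ne_top hp hqp), ← Real.rpow_mul (by positivity)]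
        congr 1
        field_simp
        exact (mul_div_cancel₀ _ hq'.ne').symm
    _ ≤ ((n : ℝ) ^ (t - 1) * ∑ i, |z i| ^ p.toReal) ^ p.toReal⁻¹ := by gcongr
    _ = (n : ℝ) ^ (q.toReal⁻¹ - p.toReal⁻¹) * lpnorm p z := by
        rw [Real.mul_rpow (by positivity) (by positivity), ← Real.rpow_mul (by positivity),
          lpnorm_of_ne_top hp]
        congr 2
        field_simp
        rw [sub_mul, div_mul_cancel₀ _ hq'.ne', one_mul]

lemma lpnorm_le_mul_lpnorm (hq : 0 < q) (hqp : q ≤ p) (z : Fin n → ℝ) :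
    lpnorm q z ≤ (n : ℝ) ^ (q⁻¹.toReal - p⁻¹.toReal) * lpnorm p z := by
  rcases eq_or_ne p ∞ with rfl | hp
  · rcases eq_or_ne q ∞ with rfl | hq'
    · simp
    · simpa [lpnorm_top] using lpnorm_le_mul_norm hq.ne' hq' z
  · simpa [ENNReal.toReal_inv] using lpnorm_le_mul_lpnorm_of_ne_top hq hqp hp z

end lpnorm

lemma Real.rpow_one_add_two_div_rpow_le {s ρ : ℝ} (hs : 0 < s) (hρ : 0 < ρ) (hρs : ρ ^ s ≤ 2) :
    (1 + 2 / ρ ^ s) ^ s⁻¹ ≤ 4 ^ s⁻¹ / ρ := by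
  have hρs0 : 0 < ρ ^ s := Real.rpow_pos_of_pos hρ s
  calc (1 + 2 / ρ ^ s) ^ s⁻¹ ≤ (4 / ρ ^ s) ^ s⁻¹ := by
        gcongr
        rw [le_div_iff₀ hρs0, add_mul, div_mul_cancel₀ _ hρs0.ne']
        linarith
    _ = 4 ^ s⁻¹ / ρ := by
        rw [Real.div_rpow (by norm_num) hρs0.le, Real.rpow_rpow_inv hρ.le hs.ne']

lemma exists_lpnorm_cover {n k : ℕ} {p : ℝ≥0∞} (hp : 0 < p) (hk : 0 < k) (hn : 0 < n) :
    ∃ S : Finset (Fin n → ℝ), S.card ≤ 2 ^ (k - 1) ∧ ∀ x : Fin n → ℝ, lpnorm p x ≤ 1 →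
      ∃ y ∈ S, lpnorm p (x - y) ≤ 4 ^ (((min 1 p)⁻¹).toReal) * 2 ^ (-(((k : ℝ) - 1) / n)) := by
  set s := (min 1 p).toReal
  have hs : 0 < s := ENNReal.toReal_pos (lt_min one_pos hp).ne'
    (ne_top_of_le_ne_top ENNReal.one_ne_top (min_le_left _ _))
  rw [ENNReal.toReal_inv]
  set ρ : ℝ := 4 ^ s⁻¹ * 2 ^ (-(((k : ℝ) - 1) / n))
  have hρ : 0 < ρ := by positivity
  rcases le_or_gt 1 ρ with h1 | h1
  · exact ⟨{0}, by simp [Nat.one_le_two_pow], fun x hx =>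
      ⟨0, mem_singleton_self 0, by simpa using hx.trans h1⟩⟩
  refine (isSNorm_lpnorm hp).exists_cover hs (continuous_lpnorm p)
    (isBounded_setOf_lpnorm_le hp.ne' 1) hρ ?_
  have hρs : ρ ^ s ≤ 2 := (Real.rpow_le_one hρ.le h1.le hs.le).trans one_le_two
  calc ((1 + 2 / ρ ^ s) ^ s⁻¹) ^ finrank ℝ (Fin n → ℝ) ≤ (4 ^ s⁻¹ / ρ) ^ n := by
        rw [finrank_fin_fun]
        gcongr
        exact Real.rpow_one_add_two_div_rpow_le hs hρ hρs
    _ = ((2 : ℝ) ^ (((k : ℝ) - 1) / n)) ^ n := by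
        rw [div_mul_cancel_left₀ (by positivity), Real.rpow_neg zero_le_two, inv_inv]
    _ = ((2 ^ (k - 1) : ℕ) : ℝ) := by
        rw [← Real.rpow_natCast, ← Real.rpow_mul zero_le_two, div_mul_cancel₀ _ (by positivity),
          ← Nat.cast_pred hk, Real.rpow_natCast]
        push_cast
        ring

lemma entropyLp_le_of_exists_cover {p q : ℝ≥0∞} {n k : ℕ} {r : ℝ} (hr : 0 < r)
    (hS : ∃ S : Finset (Fin n → ℝ), S.card ≤ 2 ^ (k - 1) ∧
      ∀ x : Fin n → ℝ, lpnorm p x ≤ 1 → ∃ y ∈ S, lpnorm q (x - y) ≤ r) :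
    entropyLp p q n k ≤ r :=
  csInf_le ⟨0, fun _ hr' => hr'.1.le⟩ ⟨hr, hS⟩

theorem entropy_lp_upper_q_le_p (p q : ℝ≥0∞) (hq : 0 < q) (hqp : q ≤ p)
    (k n : ℕ) (hk : 0 < k) (hn : 0 < n) :
    entropyLp p q n k ≤
      4 ^ (((min 1 p)⁻¹).toReal) * 2 ^ (-(((k : ℝ) - 1) / n)) *
        (n : ℝ) ^ (q⁻¹.toReal - p⁻¹.toReal) := by
  obtain ⟨S, hS, hcover⟩ := exists_lpnorm_cover (hq.trans_le hqp) hk hn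
  refine entropyLp_le_of_exists_cover
    (mul_pos (by positivity) (Real.rpow_pos_of_pos (Nat.cast_pos.2 hn) _)) ⟨S, hS, fun x hx => ?_⟩
  obtain ⟨y, hy, hxy⟩ := hcover x hx
  refine ⟨y, hy, ?_⟩
  calc lpnorm q (x - y) ≤ (n : ℝ) ^ (q⁻¹.toReal - p⁻¹.toReal) * lpnorm p (x - y) :=
        lpnorm_le_mul_lpnorm hq hqp (x - y)
    _ ≤ _ := by
        rw [mul_comm]
        gcongr
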